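/- Let v and w be words over {0,1,•} of lengths M−1 and N−1 respectively, let Δ be an M,N-invariant set fitting (0v, 0w), and let ℓ be the number of 1's in v. Then pdinv(dec(Δ)) = pdinv(Δ) − ℓ; and area(dec(Δ)) = area(Δ) if M+N ∈ Δ, while area(dec(Δ)) = area(Δ) − 1 if M+N ∉ Δ. -/
import Mathlib


/-- The alphabet {0, 1, •}. -/
inductive Symb where
  | zero : Symb
  | one : Symb
  | bullet : Symb
deriving DecidableEq

/-- An `M,N`-invariant set: a subset of ℕ with finite complement,
closed under adding `M` and adding `N`. -/
def Invariant (M N : ℕ) (Δ : Set ℕ) : Prop :=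
  {n : ℕ | n ∉ Δ}.Finite ∧ ∀ i ∈ Δ, i + M ∈ Δ ∧ i + N ∈ Δ

/-- `c` is a north step of `Δ`: `c ∉ Δ` and `c + N ∈ Δ`. -/
def NorthStep (N : ℕ) (Δ : Set ℕ) (c : ℕ) : Prop := c ∉ Δ ∧ c + N ∈ Δ

/-- `c` is an east step of `Δ`: `c ∉ Δ` and `c + M ∈ Δ`. -/
def EastStep (M : ℕ) (Δ : Set ℕ) (c : ℕ) : Prop := c ∉ Δ ∧ c + M ∈ Δ

/-- `area Δ` is the number of `c ≥ M + N` with `c ∉ Δ`. -/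
noncomputable def area (M N : ℕ) (Δ : Set ℕ) : ℕ := {c : ℕ | M + N ≤ c ∧ c ∉ Δ}.ncard

/-- `pdinv Δ` is the number of pairs `(c, d)` with `c < d`, `M ≤ d < c + M`,
`c` a north step of `Δ`, and `d ∉ Δ`. -/
noncomputable def pdinv (M N : ℕ) (Δ : Set ℕ) : ℕ :=
  {p : ℕ × ℕ | p.1 < p.2 ∧ M ≤ p.2 ∧ p.2 < p.1 + M ∧ NorthStep N Δ p.1 ∧ p.2 ∉ Δ}.ncard

/-- `Δ` fits the pair of words `(v, w)`, where `v` has length `M` and `w` has length `N`. -/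
def Fits (M N : ℕ) (Δ : Set ℕ) (v w : List Symb) : Prop :=
  v.length = M ∧ w.length = N ∧
  (∀ (i : ℕ) (hi : i < v.length),
    (v.get ⟨i, hi⟩ = Symb.bullet ↔ i ∈ Δ) ∧
    (v.get ⟨i, hi⟩ = Symb.one ↔ NorthStep N Δ i) ∧
    (v.get ⟨i, hi⟩ = Symb.zero ↔ (i ∉ Δ ∧ i + N ∉ Δ))) ∧
  (∀ (i : ℕ) (hi : i < w.length),
    (w.get ⟨i, hi⟩ = Symb.bullet ↔ i ∈ Δ) ∧
    (w.get ⟨i, hi⟩ = Symb.one ↔ EastStep M Δ i) ∧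
    (w.get ⟨i, hi⟩ = Symb.zero ↔ (i ∉ Δ ∧ i + M ∉ Δ)))

/-- Decrement: `dec Δ = {i : ℕ | i + 1 ∈ Δ}`. -/
def dec (Δ : Set ℕ) : Set ℕ := {i : ℕ | i + 1 ∈ Δ}

lemma count_one_eq_ncard (l : List Symb) :
    {i : ℕ | ∃ h : i < l.length, l.get ⟨i, h⟩ = Symb.one}.ncard = l.count Symb.one := by
  induction l with
  | nil => simp
  | cons a t ih =>
    have hfin : {i : ℕ | ∃ h : i < t.length, t.get ⟨i, h⟩ = Symb.one}.Finite :=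
      (Set.finite_Iio t.length).subset (fun i hi => by obtain ⟨h, _⟩ := hi; exact h)
    have himg : ((fun i => i + 1) '' {i : ℕ | ∃ h : i < t.length, t.get ⟨i, h⟩ = Symb.one}).ncard
        = t.count Symb.one := by
      rw [Set.ncard_image_of_injective _ (fun x y h => by omega), ih]
    by_cases ha : a = Symb.one
    · have hset : {i : ℕ | ∃ h : i < (a :: t).length, (a :: t).get ⟨i, h⟩ = Symb.one}
          = insert 0 ((fun i => i + 1) '' {i : ℕ | ∃ h : i < t.length, t.get ⟨i, h⟩ = Symb.one}) := by
        ext i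
        simp only [Set.mem_setOf_eq, Set.mem_insert_iff, Set.mem_image]
        constructor
        · rintro ⟨h, hh⟩
          cases i with
          | zero => exact Or.inl rfl
          | succ n =>
            exact Or.inr ⟨n, ⟨Nat.lt_of_succ_lt_succ h, by simpa using hh⟩, rfl⟩
        · rintro (rfl | ⟨n, ⟨hn, hone⟩, rfl⟩)
          · exact ⟨by simp, by simpa using ha⟩
          · exact ⟨by simpa using Nat.succ_lt_succ hn, by simpa using hone⟩
      rw [hset, Set.ncard_insert_of_notMem (by simp) (hfin.image _), himg, ha]
      simp [List.count_cons]
    · have hset : {i : ℕ | ∃ h : i < (a :: t).length, (a :: t).get ⟨i, h⟩ = Symb.one}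
          = (fun i => i + 1) '' {i : ℕ | ∃ h : i < t.length, t.get ⟨i, h⟩ = Symb.one} := by
        ext i
        simp only [Set.mem_setOf_eq, Set.mem_image]
        constructor
        · rintro ⟨h, hh⟩
          cases i with
          | zero => exact absurd (by simpa using hh) ha
          | succ n =>
            exact ⟨n, ⟨Nat.lt_of_succ_lt_succ h, by simpa using hh⟩, rfl⟩
        · rintro ⟨n, ⟨hn, hone⟩, rfl⟩
          exact ⟨by simpa using Nat.succ_lt_succ hn, by simpa using hone⟩
      rw [hset, himg]
      simp [List.count_cons, ha]

/-- If `Δ` is an `M,N`-invariant set fitting `(0v, 0w)` and `ℓ` is the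
number of 1's in `v`, then `pdinv (dec Δ) = pdinv Δ − ℓ`; and `area (dec Δ) = area Δ`
if `M + N ∈ Δ`, while `area (dec Δ) = area Δ − 1` if `M + N ∉ Δ`. -/
theorem dec_stats_zero_zero (M N : ℕ) (hM : 0 < M) (hN : 0 < N)
    (v w : List Symb) (hv : v.length + 1 = M) (hw : w.length + 1 = N)
    (Δ : Set ℕ) (hΔ : Invariant M N Δ)
    (hfit : Fits M N Δ (Symb.zero :: v) (Symb.zero :: w)) :
    pdinv M N (dec Δ) = pdinv M N Δ - v.count Symb.one ∧
    (M + N ∈ Δ → area M N (dec Δ) = area M N Δ) ∧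
    (M + N ∉ Δ → area M N (dec Δ) = area M N Δ - 1) := by
  obtain ⟨hvlen, hwlen, fv, fw⟩ := hfit
  have hMnot : M ∉ Δ := by
    have h := ((fw 0 (by simp)).2.2).mp (by simp [List.get])
    simpa using h.2
  have hNnot : N ∉ Δ := by
    have h := ((fv 0 (by simp)).2.2).mp (by simp [List.get])
    simpa using h.2
  have Cfin : {n : ℕ | n ∉ Δ}.Finite := hΔ.1
  -- the pdinv set of Δ
  set P : Set (ℕ × ℕ) :=
    {p : ℕ × ℕ | p.1 < p.2 ∧ M ≤ p.2 ∧ p.2 < p.1 + M ∧ NorthStep N Δ p.1 ∧ p.2 ∉ Δ} with hPdef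
  have Pfin : P.Finite :=
    (Cfin.prod Cfin).subset (fun p hp => Set.mem_prod.mpr ⟨hp.2.2.2.1.1, hp.2.2.2.2⟩)
  have hinj : Function.Injective (fun p : ℕ × ℕ => (p.1 + 1, p.2 + 1)) := by
    intro p q h
    simp only [Prod.mk.injEq] at h
    exact Prod.ext (by omega) (by omega)
  have hQP : (fun p : ℕ × ℕ => (p.1 + 1, p.2 + 1)) ''
      {p : ℕ × ℕ | p.1 < p.2 ∧ M ≤ p.2 ∧ p.2 < p.1 + M ∧ NorthStep N (dec Δ) p.1 ∧ p.2 ∉ dec Δ}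
      = {p ∈ P | M + 1 ≤ p.2} := by
    ext p
    simp only [Set.mem_image, Set.mem_setOf_eq, NorthStep, dec, Set.mem_sep_iff, hPdef]
    constructor
    · rintro ⟨⟨a, b⟩, ⟨h1, h2, h3, ⟨h4, h5⟩, h6⟩, rfl⟩
      simp only [Set.mem_setOf_eq] at h4 h5 h6 ⊢
      refine ⟨⟨by omega, by omega, by omega, ⟨h4, ?_⟩, h6⟩, by omega⟩
      rwa [Nat.add_right_comm] at h5
    · rintro ⟨⟨h1, h2, h3, ⟨h4, h5⟩, h6⟩, h7⟩
      refine ⟨(p.1 - 1, p.2 - 1), ⟨by omega, by omega, by omega, ⟨?_, ?_⟩, ?_⟩, ?_⟩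
      · simp only [Set.mem_setOf_eq]
        have e : p.1 - 1 + 1 = p.1 := by omega
        rw [e]; exact h4
      · simp only [Set.mem_setOf_eq]
        have e : p.1 - 1 + N + 1 = p.1 + N := by omega
        rw [e]; exact h5
      · simp only [Set.mem_setOf_eq]
        have e : p.2 - 1 + 1 = p.2 := by omega
        rw [e]; exact h6
      · exact Prod.ext (by simp; omega) (by simp; omega)
  have hsub : {p ∈ P | M + 1 ≤ p.2} ⊆ P := Set.sep_subset _ _
  have hdiff : P \ {p ∈ P | M + 1 ≤ p.2} = {p ∈ P | p.2 = M} := by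
    ext p
    simp only [Set.mem_diff, Set.mem_sep_iff]
    constructor
    · rintro ⟨hp, hnp⟩
      refine ⟨hp, ?_⟩
      have h2 := hp.2.1
      by_contra hne
      exact hnp ⟨hp, by omega⟩
    · rintro ⟨hp, he⟩
      exact ⟨hp, fun h => absurd h.2 (by omega)⟩
  have hPm : (fun c => (c, M)) '' {c : ℕ | 0 < c ∧ c < M ∧ NorthStep N Δ c}
      = {p ∈ P | p.2 = M} := by
    ext p
    simp only [Set.mem_image, Set.mem_setOf_eq, Set.mem_sep_iff, hPdef]
    constructor
    · rintro ⟨c, ⟨h1, h2, h3⟩, rfl⟩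
      exact ⟨⟨h2, le_refl M, by omega, h3, hMnot⟩, rfl⟩
    · rintro ⟨⟨h1, h2, h3, h4, h5⟩, h6⟩
      exact ⟨p.1, ⟨by omega, by omega, h4⟩, Prod.ext rfl h6.symm⟩
  have hC : {c : ℕ | 0 < c ∧ c < M ∧ NorthStep N Δ c}
      = (fun i => i + 1) '' {i : ℕ | ∃ h : i < v.length, v.get ⟨i, h⟩ = Symb.one} := by
    ext c
    simp only [Set.mem_setOf_eq, Set.mem_image]
    constructor
    · rintro ⟨h1, h2, h3⟩
      obtain ⟨n, rfl⟩ : ∃ n, c = n + 1 := ⟨c - 1, by omega⟩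
      have hn : n + 1 < (Symb.zero :: v).length := by simp; omega
      refine ⟨n, ⟨by simp at hn; omega, ?_⟩, rfl⟩
      have h := ((fv (n + 1) hn).2.1).mpr h3
      simpa using h
    · rintro ⟨n, ⟨hn, hone⟩, rfl⟩
      have hn' : n + 1 < (Symb.zero :: v).length := by simp; omega
      have h := ((fv (n + 1) hn').2.1).mp (by simpa using hone)
      exact ⟨Nat.succ_pos n, by omega, h⟩
  have hinjc : Function.Injective (fun c : ℕ => (c, M)) := by
    intro a b h
    simpa using congrArg Prod.fst h
  have hℓ : {p ∈ P | p.2 = M}.ncard = v.count Symb.one := by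
    rw [← hPm, Set.ncard_image_of_injective _ hinjc, hC,
      Set.ncard_image_of_injective _ (fun x y h => by omega), count_one_eq_ncard]
  have e1 : pdinv M N (dec Δ) = {p ∈ P | M + 1 ≤ p.2}.ncard := by
    rw [pdinv, ← hQP, Set.ncard_image_of_injective _ hinj]
  have e2 : pdinv M N Δ = v.count Symb.one + {p ∈ P | M + 1 ≤ p.2}.ncard := by
    rw [pdinv, ← hPdef, ← Set.ncard_diff_add_ncard_of_subset hsub Pfin, hdiff, hℓ]
  refine ⟨by omega, ?_, ?_⟩
  -- area
  all_goals {
    intro hMN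
    have himg : (fun c => c + 1) '' {c : ℕ | M + N ≤ c ∧ c ∉ dec Δ}
        = {c : ℕ | M + N + 1 ≤ c ∧ c ∉ Δ} := by
      ext d
      simp only [Set.mem_image, Set.mem_setOf_eq, dec]
      constructor
      · rintro ⟨c, ⟨hc1, hc2⟩, rfl⟩
        exact ⟨by omega, hc2⟩
      · rintro ⟨hd1, hd2⟩
        refine ⟨d - 1, ⟨by omega, ?_⟩, by omega⟩
        have e : d - 1 + 1 = d := by omega
        rw [e]; exact hd2
    have hda : area M N (dec Δ) = {c : ℕ | M + N + 1 ≤ c ∧ c ∉ Δ}.ncard := by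
      rw [area, ← himg, Set.ncard_image_of_injective _ (fun x y h => by omega)]
    first
    | { -- case M + N ∈ Δ
        have hB : {c : ℕ | M + N ≤ c ∧ c ∉ Δ} = {c : ℕ | M + N + 1 ≤ c ∧ c ∉ Δ} := by
          ext c
          simp only [Set.mem_setOf_eq]
          constructor
          · rintro ⟨h1, h2⟩
            refine ⟨?_, h2⟩
            rcases Nat.lt_or_ge (M + N) c with h | h
            · omega
            · exact absurd (by omega : c = M + N) (fun e => h2 (e ▸ hMN))
          · rintro ⟨h1, h2⟩; exact ⟨by omega, h2⟩
        rw [hda, area, hB] }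
    | { -- case M + N ∉ Δ
        have hB : {c : ℕ | M + N ≤ c ∧ c ∉ Δ}
            = insert (M + N) {c : ℕ | M + N + 1 ≤ c ∧ c ∉ Δ} := by
          ext c
          simp only [Set.mem_setOf_eq, Set.mem_insert_iff]
          constructor
          · rintro ⟨h1, h2⟩
            rcases Nat.lt_or_ge (M + N) c with h | h
            · exact Or.inr ⟨by omega, h2⟩
            · exact Or.inl (by omega)
          · rintro (rfl | ⟨h1, h2⟩)
            · exact ⟨le_refl _, hMN⟩
            · exact ⟨by omega, h2⟩
        have hfinB : {c : ℕ | M + N + 1 ≤ c ∧ c ∉ Δ}.Finite :=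
          Cfin.subset (fun c hc => hc.2)
        have : area M N Δ = {c : ℕ | M + N + 1 ≤ c ∧ c ∉ Δ}.ncard + 1 := by
          rw [area, hB, Set.ncard_insert_of_notMem (by simp) hfinB]
        rw [hda, this]; omega }
  }
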